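/- arXiv:2405.09660 — 4 statements merged into one kernel-verified Lean document; each statement's English description precedes it below -/
import Mathlib

section
/- Let (a_k) be a nonnegative real sequence, τ ≥ 1 a real number, and B ≥ 0. Suppose for all k ≥ 0 that a_{k+1} ≤ (1 - 2/(k+τ+1)) · a_k + B/(4(k+1)^2). Then for all k ≥ 0, a_{k+1} ≤ τ^2 · a_0 / (k+τ+1)^2 + B·τ^2 / (k+τ+1). -/
/-!
With `t = k + τ`, the bound `a k ≤ τ² a₀ / t² + B τ² / t` is preserved by the recursion: the
contraction factor `1 - 2/(t+1) = (t-1)/(t+1)` maps `1/t²` below `1/(t+1)²` since `t² - 1 ≤ t²`,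
and maps `1/t` to exactly `1/(t+1) - 1/(t(t+1))`, leaving room `B τ² / (t(t+1))` that absorbs the
noise `B / (4(k+1)²)` because `t ≤ (k+1)τ`. At `k = 0` the bound holds since `a₀ ≤ a₀ + Bτ`.
-/

lemma one_sub_two_div_mul_div_sq_le {t c : ℝ} (ht : 0 < t) (hc : 0 ≤ c) :
    (1 - 2 / (t + 1)) * (c / t ^ 2) ≤ c / (t + 1) ^ 2 := by
  have hcoef : (1 - 2 / (t + 1)) * (c / t ^ 2) = (t ^ 2 - 1) * c / (t ^ 2 * (t + 1) ^ 2) := by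
    field_simp
    ring
  rw [hcoef, div_le_div_iff₀ (by positivity) (by positivity)]
  nlinarith [mul_nonneg hc (sq_nonneg (t + 1))]

lemma one_sub_two_div_mul_div_add_div_mul {t : ℝ} (ht : 0 < t) (c : ℝ) :
    (1 - 2 / (t + 1)) * (c / t) + c / (t * (t + 1)) = c / (t + 1) := by
  field_simp
  ring

lemma add_mul_add_one_le_four_mul_sq_mul_sq {k τ : ℝ} (hk : 0 ≤ k) (hτ : 1 ≤ τ) :
    (k + τ) * (k + τ + 1) ≤ 4 * (k + 1) ^ 2 * τ ^ 2 := by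
  have h₁ : k + τ ≤ (k + 1) * τ := by nlinarith
  have h₂ : k + τ + 1 ≤ 2 * ((k + 1) * τ) := by nlinarith
  calc (k + τ) * (k + τ + 1) ≤ ((k + 1) * τ) * (2 * ((k + 1) * τ)) :=
        mul_le_mul h₁ h₂ (by linarith) (by positivity)
    _ ≤ 4 * (k + 1) ^ 2 * τ ^ 2 := by nlinarith [sq_nonneg ((k + 1) * τ)]

lemma div_four_mul_sq_le {k τ B : ℝ} (hk : 0 ≤ k) (hτ : 1 ≤ τ) (hB : 0 ≤ B) :
    B / (4 * (k + 1) ^ 2) ≤ B * τ ^ 2 / ((k + τ) * (k + τ + 1)) := by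
  rw [div_le_div_iff₀ (by positivity) (by positivity), mul_assoc]
  exact mul_le_mul_of_nonneg_left
    (by linarith [add_mul_add_one_le_four_mul_sq_mul_sq hk hτ]) hB

lemma one_sub_two_div_mul_add_le_of_le {t x A C : ℝ} (ht : 1 ≤ t) (hA : 0 ≤ A) (hx : x ≤ A / t ^ 2 + C / t) :
    (1 - 2 / (t + 1)) * x + C / (t * (t + 1)) ≤ A / (t + 1) ^ 2 + C / (t + 1) := by
  have ht₀ : 0 < t := by linarith
  have hcoef : 0 ≤ 1 - 2 / (t + 1) := by
    rw [sub_nonneg, div_le_one (by linarith)]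
    linarith
  calc (1 - 2 / (t + 1)) * x + C / (t * (t + 1))
      ≤ (1 - 2 / (t + 1)) * (A / t ^ 2 + C / t) + C / (t * (t + 1)) := by gcongr
    _ = (1 - 2 / (t + 1)) * (A / t ^ 2) + C / (t + 1) := by
        rw [← one_sub_two_div_mul_div_add_div_mul ht₀ C]
        ring
    _ ≤ A / (t + 1) ^ 2 + C / (t + 1) := by
        gcongr
        exact one_sub_two_div_mul_div_sq_le ht₀ hA

theorem le_sq_mul_div_add_sq_add_mul_div_of_rec (a : ℕ → ℝ) {τ B : ℝ}
    (ha₀ : 0 ≤ a 0) (hτ : 1 ≤ τ) (hB : 0 ≤ B)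
    (hrec : ∀ k : ℕ, a (k + 1) ≤ (1 - 2 / ((k : ℝ) + τ + 1)) * a k + B / (4 * ((k : ℝ) + 1) ^ 2))
    (k : ℕ) : a k ≤ τ ^ 2 * a 0 / ((k : ℝ) + τ) ^ 2 + B * τ ^ 2 / ((k : ℝ) + τ) := by
  have hτ₀ : 0 < τ := by linarith
  induction k with
  | zero =>
    rw [Nat.cast_zero, zero_add, mul_div_cancel_left₀ _ (by positivity)]
    have : 0 ≤ B * τ ^ 2 / τ := by positivity
    linarith
  | succ k ih =>
    have hk : (0 : ℝ) ≤ k := Nat.cast_nonneg k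
    push_cast
    rw [add_right_comm]
    calc a (k + 1)
        ≤ (1 - 2 / ((k : ℝ) + τ + 1)) * a k + B / (4 * ((k : ℝ) + 1) ^ 2) := hrec k
      _ ≤ (1 - 2 / ((k : ℝ) + τ + 1)) * a k + B * τ ^ 2 / ((k + τ) * (k + τ + 1)) :=
          add_le_add_right (div_four_mul_sq_le hk hτ hB) _
      _ ≤ τ ^ 2 * a 0 / ((k : ℝ) + τ + 1) ^ 2 + B * τ ^ 2 / ((k : ℝ) + τ + 1) :=
          one_sub_two_div_mul_add_le_of_le (by linarith) (by positivity) ih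

theorem stmt_0 (a : ℕ → ℝ) (τ B : ℝ)
    (ha : ∀ k, 0 ≤ a k) (hτ : 1 ≤ τ) (hB : 0 ≤ B)
    (hrec : ∀ k : ℕ, a (k + 1) ≤ (1 - 2 / ((k : ℝ) + τ + 1)) * a k + B / (4 * ((k : ℝ) + 1) ^ 2)) :
    ∀ k : ℕ, a (k + 1) ≤ τ ^ 2 * a 0 / ((k : ℝ) + τ + 1) ^ 2 + B * τ ^ 2 / ((k : ℝ) + τ + 1) := by
  intro k
  have h := le_sq_mul_div_add_sq_add_mul_div_of_rec a (ha 0) hτ hB hrec (k + 1)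
  rwa [Nat.cast_succ, add_right_comm] at h
end

section
/- Let h : ℝ^d → ℝ be differentiable with L-Lipschitz gradient, let F : ℝ^d × ℝ^r → ℝ^d satisfy F(θ, ω*(θ)) = ∇h(θ) and be L-Lipschitz in ω (for each fixed θ), where ω* : ℝ^d → ℝ^r. Fix θ, ω, and vectors f ∈ ℝ^d, and a step size α > 0 with α ≤ 1/(6L). Set θ⁺ = θ − α·f and let Δf = f − F(θ, ω), y = ‖ω − ω*(θ)‖². If additionally ‖f‖ ≤ ‖Δf‖ + L·√y + ‖∇h(θ)‖, then h(θ⁺) ≤ h(θ) − (α/4)·‖∇h(θ)‖² + (5α/4)·‖Δf‖² + (5L²α/4)·y. -/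
/-!
By the descent lemma, `h(θ - α f) ≤ h θ - α ⟪∇h θ, f⟫ + (L/2) α² ‖f‖²`. Writing `f = ∇h θ + e`,
the right-hand side is a quadratic form in `‖∇h θ‖` and `‖e‖` which, for `αL ≤ 1/6`, is dominated
by `-(α/4) ‖∇h θ‖² + (5α/8) ‖e‖²`. Finally `e = Δf + (F(θ, ω) - F(θ, ω*(θ)))`, so
`‖e‖² ≤ 2 ‖Δf‖² + 2 L² ‖ω - ω*(θ)‖²` by the Lipschitz continuity of `F` in `ω`.
-/

open scoped RealInnerProductSpace

variable {E : Type*} [NormedAddCommGroup E] [InnerProductSpace ℝ E]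

theorem neg_inner_add_sq_norm_smul_le {g f : E} {α L : ℝ} (hα : 0 < α) (hL : 0 ≤ L)
    (hαL : α * L ≤ 1 / 6) :
    -α * ⟪g, f⟫ + L / 2 * ‖α • f‖ ^ 2 ≤ -(α / 4) * ‖g‖ ^ 2 + 5 * α / 8 * ‖f - g‖ ^ 2 := by
  obtain ⟨e, rfl⟩ : ∃ e, f = g + e := ⟨f - g, (add_sub_cancel g f).symm⟩
  have hinner : ⟪g, g + e⟫ = ‖g‖ ^ 2 + ⟪g, e⟫ := by
    rw [inner_add_right, real_inner_self_eq_norm_sq]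
  have hnorm : ‖α • (g + e)‖ ^ 2 = α ^ 2 * (‖g‖ ^ 2 + 2 * ⟪g, e⟫ + ‖e‖ ^ 2) := by
    rw [norm_smul, mul_pow, Real.norm_eq_abs, sq_abs, norm_add_sq_real]
  have hcs : -(‖g‖ * ‖e‖) ≤ ⟪g, e⟫ := (abs_le.mp (abs_real_inner_le_norm g e)).1
  set c := α * L
  have hc : 0 ≤ c := mul_nonneg hα.le hL
  -- After `⟪g, e⟫ ≥ -‖g‖‖e‖`, LHS - RHS is affine in `c` and a negative definite form in
  -- `(‖g‖, ‖e‖)` at both endpoints `c = 0` and `c = 1/6`.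
  have hbracket : -(‖g‖ ^ 2 + ⟪g, e⟫) + c / 2 * (‖g‖ ^ 2 + 2 * ⟪g, e⟫ + ‖e‖ ^ 2)
      ≤ -(1 / 4) * ‖g‖ ^ 2 + 5 / 8 * ‖e‖ ^ 2 := by
    nlinarith [mul_nonneg (sub_nonneg.mpr hαL) (sq_nonneg (3 * ‖g‖ - 2 * ‖e‖)),
      mul_nonneg hc (sq_nonneg (8 * ‖g‖ - 5 * ‖e‖)),
      mul_nonneg (by linarith : (0 : ℝ) ≤ 1 - c) (neg_le_iff_add_nonneg.mp hcs)]
  rw [hinner, hnorm, add_sub_cancel_left]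
  have := mul_le_mul_of_nonneg_left hbracket hα.le
  linarith

variable [CompleteSpace E]

theorem Differentiable.le_add_inner_gradient_add_sq {h : E → ℝ} {L : ℝ}
    (hh : Differentiable ℝ h) (hLip : ∀ x y, ‖gradient h x - gradient h y‖ ≤ L * ‖x - y‖)
    (x y : E) : h y ≤ h x + ⟪gradient h x, y - x⟫ + L / 2 * ‖y - x‖ ^ 2 := by
  set v := y - x
  set φ : ℝ → ℝ := fun t ↦ h (x + t • v) - t * ⟪gradient h x, v⟫ - L / 2 * t ^ 2 * ‖v‖ ^ 2
  have hφ : ∀ t, HasDerivAt φ (⟪gradient h (x + t • v) - gradient h x, v⟫ - L * t * ‖v‖ ^ 2) t := by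
    intro t
    have hline : HasDerivAt (fun t : ℝ ↦ x + t • v) v t := by
      simpa using ((hasDerivAt_id t).smul_const v).const_add x
    have hcomp := (hh _).hasFDerivAt.comp_hasDerivAt t hline
    rw [← inner_gradient_left] at hcomp
    refine ((hcomp.sub ((hasDerivAt_id t).mul_const _)).sub
      (((hasDerivAt_pow 2 t).const_mul (L / 2)).mul_const _)).congr_deriv ?_
    rw [inner_sub_left]
    simp only [Nat.cast_ofNat, one_mul]
    ring
  have hanti : AntitoneOn φ (Set.Ici 0) := by
    refine antitoneOn_of_hasDerivWithinAt_nonpos (convex_Ici 0)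
      (fun t _ ↦ (hφ t).continuousAt.continuousWithinAt) (fun t _ ↦ (hφ t).hasDerivWithinAt) ?_
    intro t ht
    rw [interior_Ici, Set.mem_Ioi] at ht
    have hgrad : ‖gradient h (x + t • v) - gradient h x‖ ≤ L * t * ‖v‖ := by
      simpa [norm_smul, abs_of_pos ht, mul_assoc] using hLip (x + t • v) x
    have := (real_inner_le_norm _ v).trans (mul_le_mul_of_nonneg_right hgrad (norm_nonneg v))
    nlinarith
  have h01 := hanti Set.self_mem_Ici (Set.mem_Ici.mpr zero_le_one) zero_le_one
  simp only [φ, zero_smul, add_zero, one_smul, zero_mul, sub_zero, one_pow, mul_one, one_mul,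
    ne_eq, OfNat.ofNat_ne_zero, not_false_eq_true, zero_pow] at h01
  rw [add_sub_cancel] at h01
  linarith

theorem stmt_7_general (d r : ℕ) (h : EuclideanSpace ℝ (Fin d) → ℝ) (L : ℝ)
    (F : EuclideanSpace ℝ (Fin d) → EuclideanSpace ℝ (Fin r) → EuclideanSpace ℝ (Fin d))
    (ωstar : EuclideanSpace ℝ (Fin d) → EuclideanSpace ℝ (Fin r))
    (hdiff : Differentiable ℝ h)
    (hLipgrad : ∀ θ₁ θ₂, ‖gradient h θ₁ - gradient h θ₂‖ ≤ L * ‖θ₁ - θ₂‖)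
    (hF : ∀ θ, F θ (ωstar θ) = gradient h θ)
    (hLipF : ∀ θ ω₁ ω₂, ‖F θ ω₁ - F θ ω₂‖ ≤ L * ‖ω₁ - ω₂‖)
    (θ : EuclideanSpace ℝ (Fin d)) (ω : EuclideanSpace ℝ (Fin r))
    (f : EuclideanSpace ℝ (Fin d)) (α : ℝ) (hα : 0 < α) (hαL : α ≤ 1 / (6 * L)) :
    h (θ - α • f) ≤ h θ - (α / 4) * ‖gradient h θ‖ ^ 2
      + (5 * α / 4) * ‖f - F θ ω‖ ^ 2 + (5 * L ^ 2 * α / 4) * ‖ω - ωstar θ‖ ^ 2 := by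
  have hL : 0 < 6 * L := one_div_pos.mp (hα.trans_le hαL)
  have hαL' : α * L ≤ 1 / 6 := by linarith [(le_div_iff₀ hL).mp hαL]
  have hbias : ‖F θ ω - gradient h θ‖ ≤ L * ‖ω - ωstar θ‖ := by
    simpa [hF] using hLipF θ ω (ωstar θ)
  have herr : ‖f - gradient h θ‖ ^ 2 ≤ 2 * (‖f - F θ ω‖ ^ 2 + L ^ 2 * ‖ω - ωstar θ‖ ^ 2) := by
    have := norm_sub_le_norm_sub_add_norm_sub f (F θ ω) (gradient h θ)
    nlinarith [sq_nonneg (‖f - F θ ω‖ - L * ‖ω - ωstar θ‖), norm_nonneg (f - gradient h θ)]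
  have hdesc := hdiff.le_add_inner_gradient_add_sq hLipgrad θ (θ - α • f)
  rw [sub_sub_cancel_left, inner_neg_right, real_inner_smul_right, norm_neg] at hdesc
  have hstep := neg_inner_add_sq_norm_smul_le (g := gradient h θ) (f := f) hα (by linarith) hαL'
  nlinarith [mul_le_mul_of_nonneg_left herr hα.le]

theorem stmt_7 (d r : ℕ) (h : EuclideanSpace ℝ (Fin d) → ℝ) (L : ℝ)
    (F : EuclideanSpace ℝ (Fin d) → EuclideanSpace ℝ (Fin r) → EuclideanSpace ℝ (Fin d))
    (ωstar : EuclideanSpace ℝ (Fin d) → EuclideanSpace ℝ (Fin r))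
    (hdiff : Differentiable ℝ h)
    (hLipgrad : ∀ θ₁ θ₂, ‖gradient h θ₁ - gradient h θ₂‖ ≤ L * ‖θ₁ - θ₂‖)
    (hF : ∀ θ, F θ (ωstar θ) = gradient h θ)
    (hLipF : ∀ θ ω₁ ω₂, ‖F θ ω₁ - F θ ω₂‖ ≤ L * ‖ω₁ - ω₂‖)
    (θ : EuclideanSpace ℝ (Fin d)) (ω : EuclideanSpace ℝ (Fin r))
    (f : EuclideanSpace ℝ (Fin d)) (α : ℝ) (hα : 0 < α) (hαL : α ≤ 1 / (6 * L))
    (hfbound : ‖f‖ ≤ ‖f - F θ ω‖ + L * Real.sqrt (‖ω - ωstar θ‖ ^ 2) + ‖gradient h θ‖) :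
    h (θ - α • f) ≤ h θ - (α / 4) * ‖gradient h θ‖ ^ 2
      + (5 * α / 4) * ‖f - F θ ω‖ ^ 2 + (5 * L ^ 2 * α / 4) * ‖ω - ωstar θ‖ ^ 2 :=
  stmt_7_general d r h L F ωstar hdiff hLipgrad hF hLipF θ ω f α hα hαL
end

section
/- Let (V_k) be a nonnegative sequence and suppose there exist constants μ > 0, c_α > 0, τ ≥ 1 with c_α·μ ≥ 2, and B ≥ 0 such that V_{k+1} ≤ (1 − c_α·μ/(k+τ+1))·V_k + B/(4(k+1)²) for all k. Then V_{k+1} ≤ B·τ²/(k+τ+1) + τ²·V_0/(k+τ+1)² for all k. -/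
theorem stmt_8 (V : ℕ → ℝ) (μ cα τ B : ℝ)
    (hV : ∀ k, 0 ≤ V k) (hμ : 0 < μ) (hcα : 0 < cα) (hτ : 1 ≤ τ)
    (hcαμ : 2 ≤ cα * μ) (hB : 0 ≤ B)
    (hrec : ∀ k : ℕ, V (k + 1) ≤ (1 - cα * μ / ((k : ℝ) + τ + 1)) * V k + B / (4 * ((k : ℝ) + 1) ^ 2)) :
    ∀ k : ℕ, V (k + 1) ≤ B * τ ^ 2 / ((k : ℝ) + τ + 1) + τ ^ 2 * V 0 / ((k : ℝ) + τ + 1) ^ 2 := by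
  have aux : ∀ k : ℕ, ((k : ℝ) + τ) ^ 2 * V k ≤ τ ^ 2 * V 0 + (k : ℝ) * ((1 + τ ^ 2) * B) / 2 := by
    intro k
    induction k with
    | zero => simp
    | succ n ih =>
      have hx : (0:ℝ) ≤ (n:ℝ) := Nat.cast_nonneg n
      set x := (n:ℝ) with hxdef
      have hd : (0:ℝ) < x + τ + 1 := by linarith
      have hVn := hV n
      have h1 : 1 - cα * μ / (x + τ + 1) ≤ (x + τ - 1) / (x + τ + 1) := by
        have e : (x + τ - 1) / (x + τ + 1) = 1 - 2 / (x + τ + 1) := by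
          field_simp
          ring
        rw [e]
        have h2 : 2 / (x + τ + 1) ≤ cα * μ / (x + τ + 1) := by gcongr
        linarith
      have e1 : (x + τ + 1) ^ 2 * ((x + τ - 1) / (x + τ + 1) * V n)
          = (x + τ + 1) * (x + τ - 1) * V n := by
        field_simp
      have e2 : (x + τ + 1) ^ 2 * (B / (4 * (x + 1) ^ 2)) ≤ (1 + τ ^ 2) * B / 2 := by
        rw [mul_div_assoc', div_le_div_iff₀ (by positivity) two_pos]
        have f1 : 0 ≤ B * (τ * (x + 1) - 1) ^ 2 := mul_nonneg hB (sq_nonneg _)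
        have f2 : 0 ≤ B * ((1 + τ ^ 2) * ((x + 1) ^ 2 - 1)) := by
          apply mul_nonneg hB
          apply mul_nonneg (by positivity)
          nlinarith
        nlinarith [f1, f2]
      have key : (x + τ + 1) ^ 2 * V (n + 1)
          ≤ (x + τ) ^ 2 * V n + (1 + τ ^ 2) * B / 2 := by
        calc (x + τ + 1) ^ 2 * V (n + 1)
            ≤ (x + τ + 1) ^ 2 * ((x + τ - 1) / (x + τ + 1) * V n + B / (4 * (x + 1) ^ 2)) := by
              apply mul_le_mul_of_nonneg_left _ (by positivity)
              have hrecn := hrec n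
              have h3 : (1 - cα * μ / (x + τ + 1)) * V n
                  ≤ (x + τ - 1) / (x + τ + 1) * V n :=
                mul_le_mul_of_nonneg_right h1 hVn
              linarith
          _ = (x + τ + 1) * (x + τ - 1) * V n + (x + τ + 1) ^ 2 * (B / (4 * (x + 1) ^ 2)) := by
              rw [mul_add, e1]
          _ ≤ (x + τ) ^ 2 * V n + (1 + τ ^ 2) * B / 2 := by nlinarith [e2, hVn]
      push_cast
      have hring : ((x + 1) + τ) ^ 2 = (x + τ + 1) ^ 2 := by ring
      rw [hring]
      linarith [key, ih]
  intro k
  have hx : (0:ℝ) ≤ (k:ℝ) := Nat.cast_nonneg k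
  set x := (k:ℝ) with hxdef
  have hd : (0:ℝ) < x + τ + 1 := by linarith
  have hd2 : (0:ℝ) < (x + τ + 1) ^ 2 := by positivity
  have ha := aux (k + 1)
  push_cast at ha
  have hτ2 : (1:ℝ) ≤ τ ^ 2 := by nlinarith
  have hτ3 : (1:ℝ) ≤ τ ^ 3 := by nlinarith
  have h3 : V (k + 1) * (x + τ + 1) ^ 2 ≤ B * τ ^ 2 * (x + τ + 1) + τ ^ 2 * V 0 := by
    have f3 : 0 ≤ B * (x * (τ ^ 2 - 1)) := mul_nonneg hB (mul_nonneg hx (by linarith))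
    have f4 : 0 ≤ B * (2 * τ ^ 3 + τ ^ 2 - 1) := mul_nonneg hB (by linarith)
    nlinarith [ha]
  have heq : B * τ ^ 2 / (x + τ + 1) + τ ^ 2 * V 0 / (x + τ + 1) ^ 2
      = (B * τ ^ 2 * (x + τ + 1) + τ ^ 2 * V 0) / (x + τ + 1) ^ 2 := by
    field_simp
  rw [heq, le_div_iff₀ hd2]
  exact h3
end

section
/- Let h : ℝ^d → ℝ be differentiable, μ-strongly convex (⟨∇h(θ₁) − ∇h(θ₂), θ₁ − θ₂⟩ ≥ μ‖θ₁ − θ₂‖²) with minimizer θ* satisfying ∇h(θ*) = 0. Suppose F : ℝ^d × ℝ^r → ℝ^d satisfies F(θ, ω*(θ)) = ∇h(θ), is L-Lipschitz jointly in (θ, ω), and ω* : ℝ^d → ℝ^r is L-Lipschitz. Then for any θ, ω and any α with 0 < α ≤ min{μ/(6(L+1)⁴), 1/(2μ)}, writing z = ‖θ − θ*‖² and y = ‖ω − ω*(θ)‖², we have ‖θ − θ* − α·F(θ, ω)‖² ≤ (1 − μα/2)·z + (2L²α/μ)·y. -/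
/-!
Write `x = θ - θ*`, `g = ∇h(θ) = F(θ, ω*(θ))` and `b = F(θ, ω) - g`. Strong convexity gives
`⟪x, g⟫ ≥ μ‖x‖²`, the Lipschitz bounds give `‖g‖ ≤ L(L+1)‖x‖` (as `g` vanishes at `θ*`) and
`‖b‖ ≤ L‖ω - ω*(θ)‖`. Expanding `‖x - α(g + b)‖²`, the cross term `2α⟪x, b⟫` is split by Young's
inequality with weight `μ`, which uses up half of the contraction `2αμ‖x‖²`; the step-size bounds
then make the `α²` terms at most `αμ‖x‖²/2` and `α‖b‖²/μ`.
-/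

open scoped RealInnerProductSpace

theorem norm_add_sq_le_two_mul {E : Type*} [SeminormedAddCommGroup E] (u v : E) :
    ‖u + v‖ ^ 2 ≤ 2 * ‖u‖ ^ 2 + 2 * ‖v‖ ^ 2 := by
  nlinarith [norm_add_le u v, norm_nonneg (u + v), sq_nonneg (‖u‖ - ‖v‖)]

section PerturbedGradientStep

variable {E : Type*} [NormedAddCommGroup E] [InnerProductSpace ℝ E]

theorem norm_sub_smul_add_sq_eq (x g b : E) (α : ℝ) :
    ‖x - α • (g + b)‖ ^ 2 = ‖x‖ ^ 2 - 2 * α * ⟪x, g⟫ - 2 * α * ⟪x, b⟫ + α ^ 2 * ‖g + b‖ ^ 2 := by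
  rw [norm_sub_sq_real, real_inner_smul_right, inner_add_right, norm_smul, mul_pow,
    Real.norm_eq_abs, sq_abs]
  ring

theorem norm_sub_smul_add_sq_le {x g b : E} {μ α K : ℝ} (hμ : 0 < μ) (hα : 0 < α)
    (hmono : μ * ‖x‖ ^ 2 ≤ ⟪x, g⟫) (hg : ‖g‖ ≤ K * ‖x‖)
    (hαK : 4 * α * K ^ 2 ≤ μ) (hαμ : 2 * α * μ ≤ 1) :
    ‖x - α • (g + b)‖ ^ 2 ≤ (1 - μ * α / 2) * ‖x‖ ^ 2 + (2 * α / μ) * ‖b‖ ^ 2 := by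
  set N := ‖x‖
  set B := ‖b‖
  have hcross : -(N * B) ≤ ⟪x, b⟫ := neg_le_of_abs_le (abs_real_inner_le_norm x b)
  have hyoung : 2 * N * B ≤ μ * N ^ 2 + B ^ 2 / μ := by
    have hsq : μ * N ^ 2 + B ^ 2 / μ - 2 * N * B = (μ * N - B) ^ 2 / μ := by
      field_simp; ring
    linarith [div_nonneg (sq_nonneg (μ * N - B)) hμ.le]
  have hsum : ‖g + b‖ ^ 2 ≤ 2 * K ^ 2 * N ^ 2 + 2 * B ^ 2 := by
    have hg2 : ‖g‖ ^ 2 ≤ K ^ 2 * N ^ 2 := by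
      rw [← mul_pow]; exact pow_le_pow_left₀ (norm_nonneg g) hg 2
    linarith [norm_add_sq_le_two_mul g b]
  calc ‖x - α • (g + b)‖ ^ 2
      = N ^ 2 - 2 * α * ⟪x, g⟫ - 2 * α * ⟪x, b⟫ + α ^ 2 * ‖g + b‖ ^ 2 :=
        norm_sub_smul_add_sq_eq x g b α
    _ ≤ N ^ 2 - 2 * α * (μ * N ^ 2) + α * (2 * N * B)
          + α ^ 2 * (2 * K ^ 2 * N ^ 2 + 2 * B ^ 2) := by
        linarith [mul_le_mul_of_nonneg_left hmono hα.le, mul_le_mul_of_nonneg_left hcross hα.le,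
          mul_le_mul_of_nonneg_left hsum (sq_nonneg α)]
    _ ≤ N ^ 2 - 2 * α * (μ * N ^ 2) + α * (μ * N ^ 2 + B ^ 2 / μ)
          + α ^ 2 * (2 * K ^ 2 * N ^ 2 + 2 * B ^ 2) := by gcongr
    _ = (1 - α * μ + α * (2 * α * K ^ 2)) * N ^ 2 + (α / μ + α * (2 * α)) * B ^ 2 := by ring
    _ ≤ (1 - α * μ + α * (μ / 2)) * N ^ 2 + (α / μ + α * (1 / μ)) * B ^ 2 := by
        gcongr
        · linarith
        · rw [le_div_iff₀ hμ]; linarith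
    _ = (1 - μ * α / 2) * N ^ 2 + (2 * α / μ) * B ^ 2 := by ring

end PerturbedGradientStep

theorem norm_comp_sub_le_of_lipschitz {E Ω G : Type*} [SeminormedAddCommGroup E]
    [SeminormedAddCommGroup Ω] [SeminormedAddCommGroup G] {F : E → Ω → G} {ωstar : E → Ω} {L : ℝ}
    (hL : 0 ≤ L) (hLipF : ∀ θ₁ θ₂ ω₁ ω₂, ‖F θ₁ ω₁ - F θ₂ ω₂‖ ≤ L * (‖θ₁ - θ₂‖ + ‖ω₁ - ω₂‖))
    (hLipω : ∀ θ₁ θ₂, ‖ωstar θ₁ - ωstar θ₂‖ ≤ L * ‖θ₁ - θ₂‖) (θ₁ θ₂ : E) :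
    ‖F θ₁ (ωstar θ₁) - F θ₂ (ωstar θ₂)‖ ≤ L * (L + 1) * ‖θ₁ - θ₂‖ :=
  calc ‖F θ₁ (ωstar θ₁) - F θ₂ (ωstar θ₂)‖
      ≤ L * (‖θ₁ - θ₂‖ + ‖ωstar θ₁ - ωstar θ₂‖) := hLipF _ _ _ _
    _ ≤ L * (‖θ₁ - θ₂‖ + L * ‖θ₁ - θ₂‖) := by gcongr; exact hLipω θ₁ θ₂
    _ = L * (L + 1) * ‖θ₁ - θ₂‖ := by ring

theorem stmt_9_general (d r : ℕ) (h : EuclideanSpace ℝ (Fin d) → ℝ) (L μ α : ℝ)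
    (F : EuclideanSpace ℝ (Fin d) → EuclideanSpace ℝ (Fin r) → EuclideanSpace ℝ (Fin d))
    (ωstar : EuclideanSpace ℝ (Fin d) → EuclideanSpace ℝ (Fin r))
    (θstar : EuclideanSpace ℝ (Fin d))
    (hμ : 0 < μ) (hL : 1 ≤ L)
    (hsc : ∀ θ₁ θ₂, μ * ‖θ₁ - θ₂‖ ^ 2 ≤ ⟪gradient h θ₁ - gradient h θ₂, θ₁ - θ₂⟫)
    (hgradstar : gradient h θstar = 0)
    (hF : ∀ θ, F θ (ωstar θ) = gradient h θ)
    (hLipF : ∀ θ₁ θ₂ ω₁ ω₂, ‖F θ₁ ω₁ - F θ₂ ω₂‖ ≤ L * (‖θ₁ - θ₂‖ + ‖ω₁ - ω₂‖))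
    (hLipω : ∀ θ₁ θ₂, ‖ωstar θ₁ - ωstar θ₂‖ ≤ L * ‖θ₁ - θ₂‖)
    (hα0 : 0 < α) (hα1 : α ≤ μ / (6 * (L + 1) ^ 4)) (hα2 : α ≤ 1 / (2 * μ)) :
    ∀ (θ : EuclideanSpace ℝ (Fin d)) (ω : EuclideanSpace ℝ (Fin r)),
      ‖θ - θstar - α • F θ ω‖ ^ 2
        ≤ (1 - μ * α / 2) * ‖θ - θstar‖ ^ 2 + (2 * L ^ 2 * α / μ) * ‖ω - ωstar θ‖ ^ 2 := by
  intro θ ω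
  have hL0 : 0 ≤ L := by linarith
  have hmono : μ * ‖θ - θstar‖ ^ 2 ≤ ⟪θ - θstar, gradient h θ⟫ := by
    simpa [hgradstar, real_inner_comm] using hsc θ θstar
  have hgrad : ‖gradient h θ‖ ≤ L * (L + 1) * ‖θ - θstar‖ := by
    simpa [hF, hgradstar] using norm_comp_sub_le_of_lipschitz hL0 hLipF hLipω θ θstar
  have hbias : ‖F θ ω - gradient h θ‖ ≤ L * ‖ω - ωstar θ‖ := by
    simpa [hF] using hLipF θ θ ω (ωstar θ)
  have hαK : 4 * α * (L * (L + 1)) ^ 2 ≤ μ := by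
    rw [le_div_iff₀ (by positivity)] at hα1
    nlinarith [pow_le_pow_left₀ hL0 (le_add_of_nonneg_right zero_le_one : L ≤ L + 1) 2]
  have hαμ : 2 * α * μ ≤ 1 := by
    rw [le_div_iff₀ (by positivity)] at hα2; linarith
  calc ‖θ - θstar - α • F θ ω‖ ^ 2
      = ‖θ - θstar - α • (gradient h θ + (F θ ω - gradient h θ))‖ ^ 2 := by
        rw [add_sub_cancel]
    _ ≤ (1 - μ * α / 2) * ‖θ - θstar‖ ^ 2 + (2 * α / μ) * ‖F θ ω - gradient h θ‖ ^ 2 :=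
        norm_sub_smul_add_sq_le hμ hα0 hmono hgrad hαK hαμ
    _ ≤ (1 - μ * α / 2) * ‖θ - θstar‖ ^ 2 + (2 * α / μ) * (L * ‖ω - ωstar θ‖) ^ 2 := by
        gcongr
    _ = (1 - μ * α / 2) * ‖θ - θstar‖ ^ 2 + (2 * L ^ 2 * α / μ) * ‖ω - ωstar θ‖ ^ 2 := by ring

theorem stmt_9 (d r : ℕ) (h : EuclideanSpace ℝ (Fin d) → ℝ) (L μ α : ℝ)
    (F : EuclideanSpace ℝ (Fin d) → EuclideanSpace ℝ (Fin r) → EuclideanSpace ℝ (Fin d))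
    (ωstar : EuclideanSpace ℝ (Fin d) → EuclideanSpace ℝ (Fin r))
    (θstar : EuclideanSpace ℝ (Fin d))
    (hdiff : Differentiable ℝ h) (hμ : 0 < μ) (hL : 1 ≤ L)
    (hsc : ∀ θ₁ θ₂, μ * ‖θ₁ - θ₂‖ ^ 2 ≤ ⟪gradient h θ₁ - gradient h θ₂, θ₁ - θ₂⟫)
    (hgradstar : gradient h θstar = 0)
    (hF : ∀ θ, F θ (ωstar θ) = gradient h θ)
    (hLipF : ∀ θ₁ θ₂ ω₁ ω₂, ‖F θ₁ ω₁ - F θ₂ ω₂‖ ≤ L * (‖θ₁ - θ₂‖ + ‖ω₁ - ω₂‖))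
    (hLipω : ∀ θ₁ θ₂, ‖ωstar θ₁ - ωstar θ₂‖ ≤ L * ‖θ₁ - θ₂‖)
    (hα0 : 0 < α) (hα1 : α ≤ μ / (6 * (L + 1) ^ 4)) (hα2 : α ≤ 1 / (2 * μ)) :
    ∀ (θ : EuclideanSpace ℝ (Fin d)) (ω : EuclideanSpace ℝ (Fin r)),
      ‖θ - θstar - α • F θ ω‖ ^ 2
        ≤ (1 - μ * α / 2) * ‖θ - θstar‖ ^ 2 + (2 * L ^ 2 * α / μ) * ‖ω - ωstar θ‖ ^ 2 :=
  stmt_9_general d r h L μ α F ωstar θstar hμ hL hsc hgradstar hF hLipF hLipω hα0 hα1 hα2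
end
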